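/- Let H, F : ℝ → ℝ be twice continuously differentiable functions with H(x) ≥ 0, H′(x) ≥ 0, H″(x) ≥ 0 and F(x) ≥ 0, F′(x) ≥ 0, F″(x) ≥ 0 for all x ≥ 0, and assume additionally F(0) = 0. Let h be holomorphic on an open set U ⊆ ℂⁿ and define ρ : ℂⁿ → ℝ by ρ(z) := H(|h(z)|²)·F((Re h(z))²). Then for every z ∈ U with Re h(z) ≠ 0 and every w ∈ ℂⁿ, 𝓛ρ(z; w) ≥ (1/2)·H(|h(z)|²)·( F((Re h(z))²) / (Re h(z))² )·|Dh(z)w|². -/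

import Mathlib

/-!
Write `ρ = G ∘ h` with `G ζ = H (‖ζ‖²) * F ((re ζ)²)` on `ℂ`. As `h` is holomorphic, its real
second derivative is `ℂ`-bilinear, so in `D²ρ(z)[w,w] + D²ρ(z)[iw,iw]` the terms carrying `D²h`
cancel and `𝓛ρ(z; w) = |Dh(z)w|² ΔG(h z) / 4`. Differentiating `G` twice along `1` and along `I`
gives, with `s = ‖ζ‖²` and `t = (re ζ)²`,
`ΔG / 4 = s H''(s) F(t) + H'(s) F(t) + 2 t H'(s) F'(t) + t H(s) F''(t) + H(s) F'(t) / 2`,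
a sum of nonnegative terms, and `F(t) / t ≤ F'(t)` because `F` is convex with `F 0 = 0`.

That `h` is twice differentiable at all comes from the Cauchy formula
`Dh(y)w = (2πi)⁻¹ ∮ h(y + c w) / c² dc`, differentiated under the integral sign in `y` with the
Schwarz-lemma bound on `Dh` near `z` as dominating function.
-/

open Complex

/-- The Levi form of a twice real-differentiable real-valued function `φ` on `ℂⁿ`
at `z` in direction `w`: `𝓛φ(z; w) = (1/4) (D²φ(z)[w,w] + D²φ(z)[iw,iw])`, where
`D²φ(z)` is the second Fréchet derivative of `φ` over `ℝ`. -/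
noncomputable def leviForm {n : ℕ} (φ : EuclideanSpace ℂ (Fin n) → ℝ)
    (z w : EuclideanSpace ℂ (Fin n)) : ℝ :=
  (1 / 4) * (iteratedFDeriv ℝ 2 φ z ![w, w] +
    iteratedFDeriv ℝ 2 φ z ![Complex.I • w, Complex.I • w])

open Metric Filter Topology Real InnerProductSpace Laplacian

section HolomorphicRegularity

variable {E F : Type*} [NormedAddCommGroup E] [NormedSpace ℂ E]
  [NormedAddCommGroup F] [NormedSpace ℂ F] {f : E → F} {U : Set E} {z : E}

theorem DifferentiableOn.exists_ball_norm_fderiv_le (hf : DifferentiableOn ℂ f U) (hU : IsOpen U)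
    (hz : z ∈ U) : ∃ r > 0, ball z r ⊆ U ∧ ∃ C, ∀ y ∈ ball z r, ‖fderiv ℂ f y‖ ≤ C := by
  have hnhds : U ∩ f ⁻¹' ball (f z) 1 ∈ 𝓝 z := inter_mem (hU.mem_nhds hz)
    ((hf.continuousOn.continuousAt (hU.mem_nhds hz)).preimage_mem_nhds (ball_mem_nhds _ one_pos))
  obtain ⟨R, hR, hRsub⟩ := Metric.mem_nhds_iff.1 hnhds
  refine ⟨R / 2, half_pos hR, (ball_subset_ball (half_le_self hR.le)).trans
    (hRsub.trans Set.inter_subset_left), 2 / (R / 2), fun y hy => ?_⟩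
  have hsub : ball y (R / 2) ⊆ ball z R := ball_subset_ball' (by linarith [mem_ball.1 hy])
  -- Schwarz lemma: `f` maps `ball y (R / 2)` into `ball (f z) 1 ⊆ closedBall (f y) 2`.
  refine norm_fderiv_le_div_of_mapsTo_ball
    (hf.mono (hsub.trans (hRsub.trans Set.inter_subset_left))) (fun x hx => ?_) (half_pos hR)
  have hfx := (hRsub (hsub hx)).2
  have hfy := (hRsub (ball_subset_ball (half_le_self hR.le) hy)).2
  rw [Set.mem_preimage, mem_ball] at hfx hfy
  rw [mem_closedBall]
  linarith [dist_triangle_right (f x) (f y) (f z)]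

theorem fderiv_apply_eq_circleIntegral [CompleteSpace F] {y w : E} {δ : ℝ} (hδ : 0 < δ)
    (hf : ∀ c ∈ closedBall (0 : ℂ) δ, DifferentiableAt ℂ f (y + c • w)) :
    fderiv ℂ f y w = (2 * π * I)⁻¹ • ∮ c in C(0, δ), (1 / c ^ 2) • f (y + c • w) := by
  have hline : ∀ c : ℂ, HasDerivAt (fun c : ℂ => y + c • w) w c := fun c => by
    simpa using ((hasDerivAt_id c).smul_const w).const_add y
  have hslice : ∀ c ∈ closedBall (0 : ℂ) δ,
      HasDerivAt (fun c : ℂ => f (y + c • w)) (fderiv ℂ f (y + c • w) w) c := fun c hc =>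
    (hf c hc).hasFDerivAt.comp_hasDerivAt c (hline c)
  have hcauchy := DifferentiableOn.deriv_eq_smul_circleIntegral (f := fun c : ℂ => f (y + c • w))
    (c := 0) hδ fun c hc => (hslice c hc).differentiableAt.differentiableWithinAt
  simp only [sub_zero, (hslice 0 (mem_closedBall_self hδ.le)).deriv, zero_smul, add_zero]
    at hcauchy
  rw [hcauchy, smul_smul, inv_mul_cancel₀ (by simp [Real.pi_ne_zero]), one_smul]

theorem differentiableAt_circleIntegral_comp_add_smul [FiniteDimensional ℂ E] [CompleteSpace F]
    [SecondCountableTopology F] {w : E} {r δ C : ℝ} (hf : DifferentiableOn ℂ f (ball z r))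
    (hC : ∀ y ∈ ball z r, ‖fderiv ℂ f y‖ ≤ C) (hδ : 0 < δ) (hδw : δ * ‖w‖ < r) :
    DifferentiableAt ℂ (fun y => ∮ c in C(0, δ), (1 / c ^ 2) • f (y + c • w)) z := by
  set γ := circleMap 0 δ
  have hγ : ∀ θ, ‖γ θ‖ = δ := fun θ => by simp [γ, abs_of_pos hδ]
  have hγc : Continuous γ := continuous_circleMap 0 δ
  have hmem : ∀ y ∈ ball z (r - δ * ‖w‖), ∀ θ, y + γ θ • w ∈ ball z r := fun y hy θ => by
    rw [mem_ball, dist_eq_norm] at hy ⊢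
    calc ‖y + γ θ • w - z‖ ≤ ‖y - z‖ + ‖γ θ • w‖ := by
          rw [add_sub_right_comm]; exact norm_add_le _ _
      _ < r := by rw [norm_smul, hγ]; linarith
  have hkernel : Continuous fun θ => deriv γ θ • (1 / γ θ ^ 2) := by
    simp only [γ, deriv_circleMap]
    exact (hγc.mul continuous_const).smul (continuous_const.div (hγc.pow 2)
      fun θ => pow_ne_zero 2 (circleMap_ne_center hδ.ne'))
  have hcont : ∀ y ∈ ball z (r - δ * ‖w‖), Continuous fun θ =>
      deriv γ θ • (1 / γ θ ^ 2) • f (y + γ θ • w) := fun y hy => by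
    simp only [← smul_assoc]
    exact hkernel.smul (hf.continuousOn.comp_continuous (by fun_prop) (hmem y hy))
  have hs : ball z (r - δ * ‖w‖) ∈ 𝓝 z := ball_mem_nhds z (by linarith)
  borelize E
  refine (intervalIntegral.hasFDerivAt_integral_of_dominated_of_fderiv_le (𝕜 := ℂ)
    (F' := fun y θ => (deriv γ θ • (1 / γ θ ^ 2)) • fderiv ℂ f (y + γ θ • w))
    (bound := fun _ => δ * (1 / δ ^ 2) * C) hs ?_ ?_ ?_ ?_ intervalIntegrable_const ?_)
    |>.differentiableAt
  · filter_upwards [hs] with y hy using (hcont y hy).aestronglyMeasurable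
  · exact (hcont z (mem_of_mem_nhds hs)).intervalIntegrable _ _
  · exact (hkernel.measurable.smul ((measurable_fderiv ℂ f).comp
      (by fun_prop : Continuous fun θ => z + γ θ • w).measurable)).aestronglyMeasurable
  · refine MeasureTheory.ae_of_all _ fun θ _ y hy => ?_
    have hk : ‖deriv γ θ • (1 / γ θ ^ 2)‖ = δ * (1 / δ ^ 2) := by
      simp [γ, deriv_circleMap, hγ]
    rw [norm_smul, hk]
    exact mul_le_mul_of_nonneg_left (hC _ (hmem y hy θ)) (by positivity)
  · refine MeasureTheory.ae_of_all _ fun θ _ y hy => ?_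
    simp only [← smul_assoc]
    exact ((hf.differentiableAt (isOpen_ball.mem_nhds (hmem y hy θ))).hasFDerivAt.comp y
      ((hasFDerivAt_id y).add_const _)).const_smul _

theorem DifferentiableOn.differentiableAt_fderiv_apply [FiniteDimensional ℂ E] [CompleteSpace F]
    [SecondCountableTopology F] (hf : DifferentiableOn ℂ f U) (hU : IsOpen U) (hz : z ∈ U)
    (w : E) : DifferentiableAt ℂ (fun y => fderiv ℂ f y w) z := by
  obtain ⟨r, hr, hrU, C, hC⟩ := hf.exists_ball_norm_fderiv_le hU hz
  set δ := r / (2 * (‖w‖ + 1))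
  have hδ : 0 < δ := by positivity
  have hδw : δ * ‖w‖ < r / 2 := by
    rw [div_mul_eq_mul_div, div_lt_div_iff₀ (by positivity) two_pos]
    nlinarith [norm_nonneg w]
  have hcauchy : (fun y => fderiv ℂ f y w) =ᶠ[𝓝 z]
      fun y => (2 * π * I)⁻¹ • ∮ c in C(0, δ), (1 / c ^ 2) • f (y + c • w) := by
    filter_upwards [ball_mem_nhds z (half_pos hr)] with y hy
    refine fderiv_apply_eq_circleIntegral hδ fun c hc => hf.differentiableAt
      (hU.mem_nhds (hrU ?_))
    rw [mem_ball, dist_eq_norm] at hy ⊢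
    rw [mem_closedBall, dist_zero_right] at hc
    calc ‖y + c • w - z‖ ≤ ‖y - z‖ + ‖c‖ * ‖w‖ := by
          rw [add_sub_right_comm, ← norm_smul]; exact norm_add_le _ _
      _ < r := by nlinarith [norm_nonneg w]
  exact ((differentiableAt_circleIntegral_comp_add_smul (hf.mono hrU) hC hδ
    (hδw.trans (half_lt_self hr))).const_smul _).congr_of_eventuallyEq hcauchy

end HolomorphicRegularity

theorem differentiableAt_of_forall_clm_apply {𝕜 D E F : Type*} [NontriviallyNormedField 𝕜]
    [CompleteSpace 𝕜] [NormedAddCommGroup D] [NormedSpace 𝕜 D] [NormedAddCommGroup E]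
    [NormedSpace 𝕜 E] [FiniteDimensional 𝕜 E] [NormedAddCommGroup F] [NormedSpace 𝕜 F]
    {f : D → E →L[𝕜] F} {x : D} (hf : ∀ y, DifferentiableAt 𝕜 (fun x => f x y) x) :
    DifferentiableAt 𝕜 f x := by
  let e : E ≃L[𝕜] (Fin (Module.finrank 𝕜 E) → 𝕜) :=
    ContinuousLinearEquiv.ofFinrankEq (Module.finrank_fin_fun 𝕜).symm
  let coords := (e.arrowCongr (1 : F ≃L[𝕜] F)).trans (ContinuousLinearEquiv.piRing _)
  rw [← Function.id_comp f, ← coords.symm_comp_self]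
  exact coords.symm.differentiableAt.comp x (differentiableAt_pi.2 fun i => hf _)

theorem DifferentiableOn.differentiableAt_fderiv {E F : Type*} [NormedAddCommGroup E]
    [NormedSpace ℂ E] [FiniteDimensional ℂ E] [NormedAddCommGroup F] [NormedSpace ℂ F]
    [CompleteSpace F] [SecondCountableTopology F] {f : E → F} {U : Set E} {z : E}
    (hf : DifferentiableOn ℂ f U) (hU : IsOpen U) (hz : z ∈ U) :
    DifferentiableAt ℂ (fderiv ℂ f) z :=
  differentiableAt_of_forall_clm_apply (hf.differentiableAt_fderiv_apply hU hz)

section SecondDerivative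

variable {E F W : Type*} [NormedAddCommGroup E] [NormedSpace ℝ E] [NormedAddCommGroup F]
  [NormedSpace ℝ F] [NormedAddCommGroup W] [NormedSpace ℝ W]

theorem fderiv_fderiv_comp_apply {G : F → W} {h : E → F} {z : E} (hG : ContDiffAt ℝ 2 G (h z))
    (hh : ∀ᶠ y in 𝓝 z, DifferentiableAt ℝ h y) (hh' : DifferentiableAt ℝ (fderiv ℝ h) z)
    (v v' : E) :
    fderiv ℝ (fderiv ℝ (G ∘ h)) z v v' =
      fderiv ℝ (fderiv ℝ G) (h z) (fderiv ℝ h z v) (fderiv ℝ h z v') +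
        fderiv ℝ G (h z) (fderiv ℝ (fderiv ℝ h) z v v') := by
  have hG1 : ∀ᶠ y in 𝓝 z, DifferentiableAt ℝ G (h y) :=
    hh.self_of_nhds.continuousAt.eventually
      ((hG.eventually (by simp)).mono fun _ hp => hp.differentiableAt two_ne_zero)
  have hDG : DifferentiableAt ℝ (fderiv ℝ G) (h z) :=
    (hG.fderiv_right (m := 1) le_rfl).differentiableAt one_ne_zero
  have hD : fderiv ℝ (G ∘ h) =ᶠ[𝓝 z] fun y => (fderiv ℝ G (h y)).comp (fderiv ℝ h y) := by
    filter_upwards [hG1, hh] with y hGy hhy using fderiv_comp y hGy hhy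
  have hDGh : HasFDerivAt (fun y => fderiv ℝ G (h y)) _ z :=
    hDG.hasFDerivAt.comp z hh.self_of_nhds.hasFDerivAt
  rw [hD.fderiv_eq, (hDGh.clm_comp hh'.hasFDerivAt).fderiv]
  simp [add_comm]

theorem iteratedFDeriv_two_apply_eq_deriv_deriv {G : E → W} {x v : E} (hG : ContDiffAt ℝ 2 G x) :
    iteratedFDeriv ℝ 2 G x ![v, v] = deriv (deriv fun t : ℝ => G (x + t • v)) 0 := by
  have hline : ∀ t : ℝ, HasDerivAt (fun t : ℝ => x + t • v) v t := fun t => by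
    simpa using ((hasDerivAt_id t).smul_const v).const_add x
  have hGx : ∀ᶠ y in 𝓝 x, DifferentiableAt ℝ G y :=
    (hG.eventually (by simp)).mono fun _ hp => hp.differentiableAt two_ne_zero
  have hG1 : ∀ᶠ t in 𝓝 (0 : ℝ), DifferentiableAt ℝ G (x + t • v) :=
    (hline 0).continuousAt.eventually (by simpa using hGx)
  have hDG : DifferentiableAt ℝ (fderiv ℝ G) x :=
    (hG.fderiv_right (m := 1) le_rfl).differentiableAt one_ne_zero
  have hderiv : deriv (fun t : ℝ => G (x + t • v)) =ᶠ[𝓝 0] fun t => fderiv ℝ G (x + t • v) v := by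
    filter_upwards [hG1] with t ht using (ht.hasFDerivAt.comp_hasDerivAt t (hline t)).deriv
  have hD2 : HasDerivAt (fun t : ℝ => fderiv ℝ G (x + t • v) v)
      (fderiv ℝ (fderiv ℝ G) x v v) 0 := by
    simpa using ((hDG.hasFDerivAt.comp_hasDerivAt_of_eq 0 (hline 0) (by simp)).clm_apply
      (hasDerivAt_const (0 : ℝ) v))
  rw [hderiv.deriv_eq, hD2.deriv, iteratedFDeriv_two_apply]
  rfl

end SecondDerivative

theorem hasFDerivAt_fderiv_real_of_complex {E F : Type*} [NormedAddCommGroup E] [NormedSpace ℂ E]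
    [NormedAddCommGroup F] [NormedSpace ℂ F] {h : E → F} {z : E}
    (hh : ∀ᶠ y in 𝓝 z, DifferentiableAt ℂ h y) (hh' : DifferentiableAt ℂ (fderiv ℂ h) z) :
    HasFDerivAt (fderiv ℝ h) ((ContinuousLinearMap.restrictScalarsL ℂ E F ℝ ℝ).comp
      ((fderiv ℂ (fderiv ℂ h) z).restrictScalars ℝ)) z :=
  ((ContinuousLinearMap.restrictScalarsL ℂ E F ℝ ℝ).hasFDerivAt.comp z
    (hh'.hasFDerivAt.restrictScalars ℝ)).congr_of_eventuallyEq
    (hh.mono fun _ hy => hy.fderiv_restrictScalars ℝ)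

theorem ContinuousLinearMap.apply_self_add_apply_I_mul_self (B : ℂ →L[ℝ] ℂ →L[ℝ] ℝ) (v : ℂ) :
    B v v + B (I * v) (I * v) = ‖v‖ ^ 2 * (B 1 1 + B I I) := by
  have hB : ∀ a b : ℝ, B (a • 1 + b • I) (a • 1 + b • I) =
      a ^ 2 * B 1 1 + a * b * (B 1 I + B I 1) + b ^ 2 * B I I := fun a b => by
    simp only [map_add, map_smul, add_apply, smul_apply, smul_eq_mul]
    ring
  have hv : v = v.re • (1 : ℂ) + v.im • I := by apply Complex.ext <;> simp
  have hIv : I * v = (-v.im) • (1 : ℂ) + v.re • I := by apply Complex.ext <;> simp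
  have hBv := hB v.re v.im
  have hBIv := hB (-v.im) v.re
  rw [← hv] at hBv
  rw [← hIv] at hBIv
  rw [hBv, hBIv, Complex.sq_norm, Complex.normSq_apply]
  ring

theorem leviForm_comp_eq_laplacian {n : ℕ} {G : ℂ → ℝ} {h : EuclideanSpace ℂ (Fin n) → ℂ}
    {z : EuclideanSpace ℂ (Fin n)} (hG : ContDiffAt ℝ 2 G (h z))
    (hh : ∀ᶠ y in 𝓝 z, DifferentiableAt ℂ h y) (hh' : DifferentiableAt ℂ (fderiv ℂ h) z)
    (w : EuclideanSpace ℂ (Fin n)) :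
    leviForm (fun ζ => G (h ζ)) z w = ‖fderiv ℂ h z w‖ ^ 2 * Δ G (h z) / 4 := by
  have hD2h := hasFDerivAt_fderiv_real_of_complex hh hh'
  have hDh : fderiv ℝ h z = (fderiv ℂ h z).restrictScalars ℝ :=
    hh.self_of_nhds.fderiv_restrictScalars ℝ
  have hchain := fderiv_fderiv_comp_apply hG (hh.mono fun _ hy => hy.restrictScalars ℝ)
    hD2h.differentiableAt
  -- `D²h(z)` is `ℂ`-bilinear, so its contributions in the directions `w` and `I • w` cancel.
  have hD2hI : fderiv ℂ (fderiv ℂ h) z (I • w) (I • w) = -fderiv ℂ (fderiv ℂ h) z w w := by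
    simp only [map_smul, smul_apply, smul_smul, I_mul_I, neg_one_smul]
  have hDhI : fderiv ℂ h z (I • w) = I * fderiv ℂ h z w := by simp
  simp only [leviForm, iteratedFDeriv_two_apply, Matrix.cons_val_zero, Matrix.cons_val_one,
    laplacian_eq_iteratedFDeriv_complexPlane]
  rw [show (fun ζ => G (h ζ)) = G ∘ h from rfl, hchain, hchain, hD2h.fderiv, hDh]
  simp only [ContinuousLinearMap.coe_comp, Function.comp_apply,
    ContinuousLinearMap.coe_restrictScalars', ContinuousLinearMap.coe_restrict_scalarsL',
    hD2hI, hDhI, map_neg]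
  rw [← ContinuousLinearMap.apply_self_add_apply_I_mul_self]
  ring

section ModelFunction

variable {H F : ℝ → ℝ}

theorem contDiff_comp_norm_sq_mul_comp_re_sq {k : WithTop ℕ∞} (hH : ContDiff ℝ k H)
    (hF : ContDiff ℝ k F) : ContDiff ℝ k fun ζ : ℂ => H (‖ζ‖ ^ 2) * F (ζ.re ^ 2) :=
  (hH.comp (contDiff_norm_sq ℝ)).mul (hF.comp (reCLM.contDiff.pow 2))

theorem deriv_deriv_mul_comp (hH : ContDiff ℝ 2 H) (hF : ContDiff ℝ 2 F) {p q p' q' : ℝ → ℝ}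
    {p'' q'' x₀ : ℝ} (hp : ∀ x, HasDerivAt p (p' x) x) (hq : ∀ x, HasDerivAt q (q' x) x)
    (hp' : HasDerivAt p' p'' x₀) (hq' : HasDerivAt q' q'' x₀) :
    deriv (deriv fun x => H (p x) * F (q x)) x₀ =
      (deriv (deriv H) (p x₀) * p' x₀ ^ 2 + deriv H (p x₀) * p'') * F (q x₀) +
        2 * deriv H (p x₀) * p' x₀ * deriv F (q x₀) * q' x₀ +
        H (p x₀) * (deriv (deriv F) (q x₀) * q' x₀ ^ 2 + deriv F (q x₀) * q'') := by
  have hH1 : ∀ x, HasDerivAt H (deriv H x) x := fun x =>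
    (hH.differentiable two_ne_zero x).hasDerivAt
  have hF1 : ∀ x, HasDerivAt F (deriv F x) x := fun x =>
    (hF.differentiable two_ne_zero x).hasDerivAt
  have hH2 : ∀ x, HasDerivAt (deriv H) (deriv (deriv H) x) x := fun x =>
    (hH.differentiable_deriv_two x).hasDerivAt
  have hF2 : ∀ x, HasDerivAt (deriv F) (deriv (deriv F) x) x := fun x =>
    (hF.differentiable_deriv_two x).hasDerivAt
  have hderiv : deriv (fun x => H (p x) * F (q x)) =
      fun x => deriv H (p x) * p' x * F (q x) + H (p x) * (deriv F (q x) * q' x) :=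
    funext fun x => (((hH1 _).comp x (hp x)).mul ((hF1 _).comp x (hq x))).deriv
  have hderiv2 : HasDerivAt
      (fun x => deriv H (p x) * p' x * F (q x) + H (p x) * (deriv F (q x) * q' x)) _ x₀ :=
    ((((hH2 _).comp x₀ (hp x₀)).mul hp').mul ((hF1 _).comp x₀ (hq x₀))).add
      (((hH1 _).comp x₀ (hp x₀)).mul (((hF2 _).comp x₀ (hq x₀)).mul hq'))
  rw [hderiv, hderiv2.deriv]
  simp only [Function.comp_apply, Pi.mul_apply]
  ring

theorem laplacian_comp_norm_sq_mul_comp_re_sq (hH : ContDiff ℝ 2 H) (hF : ContDiff ℝ 2 F) (ζ : ℂ) :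
    Δ (fun ζ : ℂ => H (‖ζ‖ ^ 2) * F (ζ.re ^ 2)) ζ =
      4 * (‖ζ‖ ^ 2 * deriv (deriv H) (‖ζ‖ ^ 2) * F (ζ.re ^ 2) +
        deriv H (‖ζ‖ ^ 2) * F (ζ.re ^ 2) +
        2 * ζ.re ^ 2 * deriv H (‖ζ‖ ^ 2) * deriv F (ζ.re ^ 2) +
        ζ.re ^ 2 * H (‖ζ‖ ^ 2) * deriv (deriv F) (ζ.re ^ 2) +
        H (‖ζ‖ ^ 2) * deriv F (ζ.re ^ 2) / 2) := by
  have hG := contDiff_comp_norm_sq_mul_comp_re_sq hH hF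
  have hsq : ∀ (a : ℝ) x, HasDerivAt (fun x => (a + x) ^ 2) (2 * (a + x)) x := fun a x => by
    simpa using ((hasDerivAt_id x).const_add a).fun_pow 2
  have hlin : ∀ (a : ℝ) x, HasDerivAt (fun x => 2 * (a + x)) 2 x := fun a x => by
    simpa using ((hasDerivAt_id x).const_add a).const_mul 2
  rw [laplacian_eq_iteratedFDeriv_complexPlane]
  dsimp only
  rw [iteratedFDeriv_two_apply_eq_deriv_deriv hG.contDiffAt,
    iteratedFDeriv_two_apply_eq_deriv_deriv hG.contDiffAt]
  have hre : (fun t : ℝ => H (‖ζ + t • (1 : ℂ)‖ ^ 2) * F ((ζ + t • (1 : ℂ)).re ^ 2)) =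
      fun t => H ((ζ.re + t) ^ 2 + ζ.im ^ 2) * F ((ζ.re + t) ^ 2) := by
    ext t; simp [Complex.sq_norm, Complex.normSq_apply, ← sq]
  have him : (fun t : ℝ => H (‖ζ + t • I‖ ^ 2) * F ((ζ + t • I).re ^ 2)) =
      fun t => H (ζ.re ^ 2 + (ζ.im + t) ^ 2) * F (ζ.re ^ 2) := by
    ext t; simp [Complex.sq_norm, Complex.normSq_apply, ← sq]
  rw [hre, him, deriv_deriv_mul_comp hH hF (fun x => (hsq _ x).add_const _) (hsq _) (hlin _ 0)
    (hlin _ 0), deriv_deriv_mul_comp hH hF (fun x => (hsq _ x).const_add _)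
    (fun _ => hasDerivAt_const _ _) (hlin _ 0) (hasDerivAt_const 0 (0 : ℝ))]
  simp only [add_zero, Complex.sq_norm, Complex.normSq_apply, ← sq]
  ring

end ModelFunction

theorem div_le_deriv_of_deriv_deriv_nonneg {F : ℝ → ℝ} (hF : ContDiff ℝ 2 F)
    (hF2 : ∀ x : ℝ, 0 ≤ x → 0 ≤ deriv (deriv F) x) (hF0 : F 0 = 0) {t : ℝ} (ht : 0 < t) :
    F t / t ≤ deriv F t := by
  have hconvex : ConvexOn ℝ (Set.Ici 0) F :=
    convexOn_of_deriv2_nonneg' (convex_Ici 0) (hF.differentiable two_ne_zero).differentiableOn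
      hF.differentiable_deriv_two.differentiableOn fun x hx => by simpa using hF2 x hx
  simpa [slope_def_field, hF0] using hconvex.slope_le_deriv Set.self_mem_Ici ht.le ht
    (hF.differentiable two_ne_zero t)

/-- Let `H, F : ℝ → ℝ` be `C²` with `H, H', H'' ≥ 0` and `F, F', F'' ≥ 0` on `[0,∞)`,
and `F 0 = 0`.  Let `h` be holomorphic on an open `U ⊆ ℂⁿ` and set
`ρ(z) = H(|h z|²) F((Re h z)²)`.  Then for `z ∈ U` with `Re h z ≠ 0` and `w ∈ ℂⁿ`,
`𝓛ρ(z; w) ≥ (1/2) H(|h z|²) (F((Re h z)²) / (Re h z)²) |Dh(z)w|²`. -/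
theorem leviForm_model_lower_bound_quotient {n : ℕ}
    (H F : ℝ → ℝ) (hH : ContDiff ℝ 2 H) (hF : ContDiff ℝ 2 F)
    (hH0 : ∀ x : ℝ, 0 ≤ x → 0 ≤ H x)
    (hH1 : ∀ x : ℝ, 0 ≤ x → 0 ≤ deriv H x)
    (hH2 : ∀ x : ℝ, 0 ≤ x → 0 ≤ deriv (deriv H) x)
    (hF0 : ∀ x : ℝ, 0 ≤ x → 0 ≤ F x)
    (hF1 : ∀ x : ℝ, 0 ≤ x → 0 ≤ deriv F x)
    (hF2 : ∀ x : ℝ, 0 ≤ x → 0 ≤ deriv (deriv F) x)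
    (hFzero : F 0 = 0)
    {U : Set (EuclideanSpace ℂ (Fin n))} (hU : IsOpen U)
    {h : EuclideanSpace ℂ (Fin n) → ℂ} (hh : DifferentiableOn ℂ h U)
    {z : EuclideanSpace ℂ (Fin n)} (hz : z ∈ U) (hre : (h z).re ≠ 0)
    (w : EuclideanSpace ℂ (Fin n)) :
    leviForm (fun ζ => H (‖h ζ‖ ^ 2) * F ((h ζ).re ^ 2)) z w ≥
      (1 / 2) * H (‖h z‖ ^ 2) *
        (F ((h z).re ^ 2) / (h z).re ^ 2) *
        ‖fderiv ℂ h z w‖ ^ 2 := by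
  rw [leviForm_comp_eq_laplacian (G := fun ζ : ℂ => H (‖ζ‖ ^ 2) * F (ζ.re ^ 2))
    (contDiff_comp_norm_sq_mul_comp_re_sq hH hF).contDiffAt
    (eventually_mem_nhds_iff.2 (hU.mem_nhds hz) |>.mono fun y hy => hh.differentiableAt hy)
    (hh.differentiableAt_fderiv hU hz) w, laplacian_comp_norm_sq_mul_comp_re_sq hH hF]
  set s := ‖h z‖ ^ 2
  set t := (h z).re ^ 2
  have hs : 0 ≤ s := by positivity
  have ht : 0 < t := by positivity
  have hslope := mul_le_mul_of_nonneg_left (div_le_deriv_of_deriv_deriv_nonneg hF hF2 hFzero ht)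
    (hH0 s hs)
  have hrest : 0 ≤ s * deriv (deriv H) s * F t + deriv H s * F t +
      2 * t * deriv H s * deriv F t + t * H s * deriv (deriv F) t := by
    have := mul_nonneg (mul_nonneg hs (hH2 s hs)) (hF0 t ht.le)
    have := mul_nonneg (hH1 s hs) (hF0 t ht.le)
    have := mul_nonneg (mul_nonneg (mul_nonneg zero_le_two ht.le) (hH1 s hs)) (hF1 t ht.le)
    have := mul_nonneg (mul_nonneg ht.le (hH0 s hs)) (hF2 t ht.le)
    linarith
  have hv : 0 ≤ ‖fderiv ℂ h z w‖ ^ 2 := by positivity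
  rw [ge_iff_le]
  nlinarith [mul_nonneg hv hrest, mul_le_mul_of_nonneg_left hslope hv]
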